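/- arXiv:2307.12474 — 3 statements merged into one kernel-verified Lean document; each statement's English description precedes it below -/
import Mathlib

section
/- Let G be an abelian definable group in an o-minimal structure, and let G⁰ be a definable subgroup of G of finite index that is contained in every definable subgroup of G of finite index (the definably connected component of the identity). Then G is monogenic — i.e., there exists g ∈ G such that the only definable subgroup of G containing g is G — if and only if both: (a) G⁰ is monogenic, i.e., there exists h ∈ G⁰ such that every definable subgroup of G containing h contains G⁰; and (b) the finite quotient group G/G⁰ is cyclic. -/
open FirstOrder FirstOrder.Language

/-- A subset of a linearly ordered set is a finite union of points and open intervals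
(with endpoints in the set or `±∞`). -/
def IsFinUnionOfPointsAndOpenIntervals {M : Type*} [LinearOrder M] (s : Set M) : Prop :=
  ∃ I : Finset (Set M), s = ⋃₀ ↑I ∧ ∀ t ∈ I,
    (∃ a : M, t = {a}) ∨ (∃ a b : M, t = Set.Ioo a b) ∨
      (∃ a : M, t = Set.Ioi a) ∨ (∃ a : M, t = Set.Iio a) ∨ t = Set.univ

/-- An `L`-structure `M` carrying a linear order is o-minimal if every subset of `M` definable
with parameters from `M` is a finite union of points and open intervals. -/
def IsOMinimalStructure (L : FirstOrder.Language) (M : Type*) [L.Structure M]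
    [LinearOrder M] : Prop :=
  ∀ s : Set M, Set.Definable₁ (Set.univ : Set M) L s → IsFinUnionOfPointsAndOpenIntervals s

/-- `ι` realizes the group `G` as a definable group in the structure `M`: `ι` identifies `G`
with a definable subset of `M^n`, and the graph of multiplication is a definable subset
of `M^{3n}`. -/
def IsDefinableGroupEmbedding (L : FirstOrder.Language) (M : Type*) [L.Structure M]
    {n : ℕ} {G : Type*} [Group G] (ι : G → (Fin n → M)) : Prop :=
  Function.Injective ι ∧
    Set.Definable (Set.univ : Set M) L (Set.range ι) ∧
    Set.Definable (Set.univ : Set M) L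
      {f : (Fin n ⊕ Fin n) ⊕ Fin n → M |
        ∃ a b : G, f = Sum.elim (Sum.elim (ι a) (ι b)) (ι (a * b))}

/-- A subgroup of a definable group is definable when its underlying set (viewed inside `M^n`)
is definable with parameters. -/
def IsDefinableSubgroup (L : FirstOrder.Language) (M : Type*) [L.Structure M]
    {n : ℕ} {G : Type*} [Group G] (ι : G → (Fin n → M)) (H : Subgroup G) : Prop :=
  Set.Definable (Set.univ : Set M) L (ι '' (H : Set G))

/-!
A subgroup `S` containing a definable subgroup `K` with `[S : K]` finite is definable, being a
finite union of cosets of `K`. This applies to every subgroup containing `G⁰`, and to `K ⊔ ⟨g⟩`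
whenever `g` has finite order modulo `K`.

If `g` definably generates `G`, its image therefore generates `G/G⁰`, and `g ^ k`, with `k` the
order of `g` modulo `G⁰`, definably generates `G⁰`: for definable `H ∋ g ^ k`, the definable
subgroup `(H ⊓ G⁰) ⊔ ⟨g⟩` is all of `G`, and an element `c g ^ j` of it lies in `G⁰` only if
`k ∣ j`. Conversely, if `h` definably generates `G⁰`, then `G⁰` is divisible: the image of `G⁰`
under `x ↦ x ^ k` is definable, together with `h` it definably generates a subgroup containing
`G⁰`, so it has finite index and contains `G⁰` by minimality. If `a` generates `G` modulo `G⁰`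
and `s ∈ G⁰` solves `(a s) ^ [G : G⁰] = h`, then `a s` definably generates `G`.

Definability of the image under `x ↦ x ^ k` comes from the graph of multiplication by induction on
`k`, working with relations on `G` whose tuples, coded through `ι`, form a definable set in `M`.
-/

open Set Pointwise

theorem Subgroup.relIndex_sup_zpowers_ne_zero {G : Type*} [Group G] {K : Subgroup G} [K.Normal]
    {g : G} {k : ℕ} (hk : k ≠ 0) (hgk : g ^ k ∈ K) : K.relIndex (K ⊔ zpowers g) ≠ 0 := by
  have h := relIndex_ker (zpowers g) (QuotientGroup.mk' K)
  rw [QuotientGroup.ker_mk', MonoidHom.map_zpowers, Nat.card_zpowers] at h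
  rw [relIndex_sup_left, h]
  refine (isOfFinOrder_iff_pow_eq_one.2 ⟨k, Nat.pos_of_ne_zero hk, ?_⟩).orderOf_pos.ne'
  rwa [QuotientGroup.mk'_apply, ← QuotientGroup.mk_pow, QuotientGroup.eq_one_iff]

theorem QuotientGroup.pow_orderOf_mk_mem {G : Type*} [Group G] (K : Subgroup G) [K.Normal]
    (g : G) : g ^ orderOf (g : G ⧸ K) ∈ K := by
  rw [← eq_one_iff, mk_pow, pow_orderOf_eq_one]

theorem Subgroup.eq_top_of_le_of_zpowers_mk_eq_top {G : Type*} [Group G] {K H : Subgroup G}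
    [K.Normal] (hKH : K ≤ H) {g : G} (hgen : zpowers (g : G ⧸ K) = ⊤) (hg : g ∈ H) : H = ⊤ := by
  have hmap : zpowers (g : G ⧸ K) ≤ H.map (QuotientGroup.mk' K) :=
    (zpowers_le).2 ⟨g, hg, rfl⟩
  rw [hgen, top_le_iff] at hmap
  rw [← sup_eq_right.2 hKH, ← QuotientGroup.comap_map_mk', hmap, comap_top]

theorem Set.univ_definable_singleton {L : FirstOrder.Language} {M : Type*} [L.Structure M]
    {α : Type*} [Finite α] (v : α → M) : (univ : Set M).Definable L {v} := by
  have h : ({v} : Set (α → M)) =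
      ⋂ i, (fun w => w ∘ fun _ : Fin 1 => i) ⁻¹' {x : Fin 1 → M | x 0 ∈ ({v i} : Set M)} := by
    ext w
    simp [funext_iff]
  rw [h]
  exact definable_iInter_of_finite fun i =>
    ((Definable.singleton L (v i)).mono (subset_univ _)).preimage_comp _

section DefinableRelations

def tupleCode {M : Type*} {n : ℕ} {G : Type*} (ι : G → Fin n → M) {α : Type*} (x : α → G) :
    α × Fin n → M :=
  fun p => ι (x p.1) p.2

def IsDefinableRel (L : FirstOrder.Language) (M : Type*) [L.Structure M] {n : ℕ} {G : Type*}
    (ι : G → Fin n → M) {α : Type*} (R : Set (α → G)) : Prop :=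
  (univ : Set M).Definable L (tupleCode ι '' R)

variable {L : FirstOrder.Language} {M : Type*} [L.Structure M] {n : ℕ} {G : Type*}
  {α β : Type*} {ι : G → Fin n → M}

theorem tupleCode_injective (hι : Function.Injective ι) :
    Function.Injective (tupleCode ι : (α → G) → α × Fin n → M) := fun _ _ h =>
  funext fun a => hι <| funext fun j => congrFun h (a, j)

theorem isDefinableRel_univ [Finite α] (hrange : (univ : Set M).Definable L (range ι)) :
    IsDefinableRel L M ι (univ : Set (α → G)) := by
  have h : tupleCode ι '' (univ : Set (α → G)) =
      ⋂ a : α, (fun v => v ∘ fun j => (a, j)) ⁻¹' range ι := by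
    ext v
    simp only [image_univ, mem_range, mem_iInter, mem_preimage]
    constructor
    · rintro ⟨x, rfl⟩ a
      exact ⟨x a, rfl⟩
    · intro h
      choose x hx using h
      exact ⟨x, funext fun p => congrFun (hx p.1) p.2⟩
  unfold IsDefinableRel
  rw [h]
  exact definable_iInter_of_finite fun a => hrange.preimage_comp _

namespace IsDefinableRel

theorem inter (hι : Function.Injective ι) {R S : Set (α → G)} (hR : IsDefinableRel L M ι R)
    (hS : IsDefinableRel L M ι S) : IsDefinableRel L M ι (R ∩ S) := by
  unfold IsDefinableRel
  rw [image_inter (tupleCode_injective hι)]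
  exact Definable.inter hR hS

theorem image_comp [Finite α] [Finite β] {R : Set (β → G)} (hR : IsDefinableRel L M ι R)
    (σ : α → β) : IsDefinableRel L M ι ((fun x => x ∘ σ) '' R) := by
  have h : tupleCode ι '' ((fun x => x ∘ σ) '' R) =
      (fun v => v ∘ Prod.map σ id) '' (tupleCode ι '' R) := by
    simp only [image_image]
    rfl
  unfold IsDefinableRel
  rw [h]
  exact Definable.image_comp hR _

theorem preimage_comp [Finite β] (hι : Function.Injective ι)
    (hrange : (univ : Set M).Definable L (range ι)) {R : Set (α → G)}
    (hR : IsDefinableRel L M ι R) (σ : α → β) :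
    IsDefinableRel L M ι ((fun y => y ∘ σ) ⁻¹' R) := by
  have h : tupleCode ι '' ((fun y => y ∘ σ) ⁻¹' R) =
      tupleCode ι '' univ ∩ (fun v => v ∘ Prod.map σ id) ⁻¹' (tupleCode ι '' R) := by
    ext v
    constructor
    · rintro ⟨y, hy, rfl⟩
      exact ⟨mem_image_of_mem _ trivial, y ∘ σ, hy, rfl⟩
    · rintro ⟨⟨y, -, rfl⟩, x, hx, hxy⟩
      refine ⟨y, ?_, rfl⟩
      have hx' : x = y ∘ σ := tupleCode_injective hι hxy
      rwa [mem_preimage, ← hx']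
  unfold IsDefinableRel
  rw [h]
  exact Definable.inter (isDefinableRel_univ hrange) (Definable.preimage_comp _ hR)

end IsDefinableRel

theorem isDefinableRel_singleton [Finite α] (x : α → G) : IsDefinableRel L M ι {x} := by
  unfold IsDefinableRel
  rw [image_singleton]
  exact univ_definable_singleton _

theorem isDefinableRel_fin_one_iff {s : Set G} :
    IsDefinableRel L M ι {x : Fin 1 → G | x 0 ∈ s} ↔ (univ : Set M).Definable L (ι '' s) := by
  have h₁ : ι '' s = (fun v => v ∘ fun j => ((0 : Fin 1), j)) ''
      (tupleCode ι '' {x : Fin 1 → G | x 0 ∈ s}) := by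
    rw [image_image]
    ext v
    constructor
    · rintro ⟨a, ha, rfl⟩
      exact ⟨fun _ => a, ha, rfl⟩
    · rintro ⟨x, hx, rfl⟩
      exact ⟨x 0, hx, rfl⟩
  have h₂ : tupleCode ι '' {x : Fin 1 → G | x 0 ∈ s} = (fun v => v ∘ Prod.snd) '' (ι '' s) := by
    rw [image_image]
    ext v
    constructor
    · rintro ⟨x, hx, rfl⟩
      refine ⟨x 0, hx, funext fun ⟨i, j⟩ => ?_⟩
      rw [Subsingleton.elim i 0]
      rfl
    · rintro ⟨a, ha, rfl⟩
      exact ⟨fun _ => a, ha, rfl⟩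
  unfold IsDefinableRel
  exact ⟨fun h => h₁ ▸ h.image_comp _, fun h => h₂ ▸ h.image_comp _⟩

namespace IsDefinableGroupEmbedding

variable [Group G]

theorem isDefinableRel_mul (hG : IsDefinableGroupEmbedding L M ι) :
    IsDefinableRel L M ι {x : Fin 3 → G | x 2 = x 0 * x 1} := by
  let f : Fin 3 × Fin n → (Fin n ⊕ Fin n) ⊕ Fin n := fun p =>
    ![Sum.inl (Sum.inl p.2), Sum.inl (Sum.inr p.2), Sum.inr p.2] p.1
  have h : tupleCode ι '' {x : Fin 3 → G | x 2 = x 0 * x 1} = (fun v => v ∘ f) ''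
      {v | ∃ a b : G, v = Sum.elim (Sum.elim (ι a) (ι b)) (ι (a * b))} := by
    ext v
    constructor
    · rintro ⟨x, hx : x 2 = x 0 * x 1, rfl⟩
      refine ⟨_, ⟨x 0, x 1, rfl⟩, ?_⟩
      funext ⟨i, j⟩
      fin_cases i <;> simp [f, tupleCode, hx]
    · rintro ⟨_, ⟨a, b, rfl⟩, rfl⟩
      refine ⟨![a, b, a * b], rfl, ?_⟩
      funext ⟨i, j⟩
      fin_cases i <;> rfl
  unfold IsDefinableRel
  rw [h]
  exact hG.2.2.image_comp f

theorem isDefinableRel_pow (hG : IsDefinableGroupEmbedding L M ι) (k : ℕ) :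
    IsDefinableRel L M ι {x : Fin 2 → G | x 1 = x 0 ^ k} := by
  induction k with
  | zero =>
    have h : {x : Fin 2 → G | x 1 = x 0 ^ 0} =
        (fun x => x ∘ fun _ : Fin 1 => 1) ⁻¹' {fun _ => 1} := by
      ext x
      simp [funext_iff]
    rw [h]
    exact (isDefinableRel_singleton _).preimage_comp hG.1 hG.2.1 _
  | succ k ih =>
    -- `y = (a, a ^ k, a ^ (k + 1))`, with the middle coordinate projected away
    have h : {x : Fin 2 → G | x 1 = x 0 ^ (k + 1)} =
        (fun y => y ∘ (![0, 2] : Fin 2 → Fin 3)) ''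
          ((fun y => y ∘ (![0, 1] : Fin 2 → Fin 3)) ⁻¹' {x | x 1 = x 0 ^ k} ∩
            (fun y => y ∘ (![1, 0, 2] : Fin 3 → Fin 3)) ⁻¹' {x | x 2 = x 0 * x 1}) := by
      ext x
      constructor
      · intro hx
        refine ⟨![x 0, x 0 ^ k, x 1], ⟨rfl, ?_⟩, ?_⟩
        · simpa [pow_succ] using hx
        · funext i
          fin_cases i <;> rfl
      · rintro ⟨y, ⟨hy₁, hy₂⟩, rfl⟩
        simp_all [pow_succ]
    rw [h]
    exact ((ih.preimage_comp hG.1 hG.2.1 _).inter hG.1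
      (hG.isDefinableRel_mul.preimage_comp hG.1 hG.2.1 _)).image_comp _

theorem definable_image_smul (hG : IsDefinableGroupEmbedding L M ι) (c : G)
    {s : Set G} (hs : (univ : Set M).Definable L (ι '' s)) :
    (univ : Set M).Definable L (ι '' (c • s)) := by
  rw [← isDefinableRel_fin_one_iff] at hs ⊢
  -- `y = (c, a, c * a)` with `a ∈ s`
  have h : {x : Fin 1 → G | x 0 ∈ c • s} = (fun y => y ∘ (![2] : Fin 1 → Fin 3)) ''
      ({y | y 2 = y 0 * y 1} ∩ (fun y => y ∘ (![0] : Fin 1 → Fin 3)) ⁻¹' {![c]} ∩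
        (fun y => y ∘ (![1] : Fin 1 → Fin 3)) ⁻¹' {x | x 0 ∈ s}) := by
    ext x
    constructor
    · rintro ⟨a, ha, hx⟩
      refine ⟨![c, a, x 0], ⟨⟨hx.symm, ?_⟩, ha⟩, ?_⟩ <;>
      · funext i
        fin_cases i
        rfl
    · rintro ⟨y, ⟨⟨hy, hyc⟩, hys⟩, rfl⟩
      have hc : y 0 = c := congrFun hyc 0
      exact ⟨y 1, hys, by simp_all [smul_eq_mul]⟩
  rw [h]
  exact ((hG.isDefinableRel_mul.inter hG.1 ((isDefinableRel_singleton _).preimage_comp hG.1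
    hG.2.1 _)).inter hG.1 (hs.preimage_comp hG.1 hG.2.1 _)).image_comp _

theorem definable_image_pow (hG : IsDefinableGroupEmbedding L M ι) (k : ℕ)
    {s : Set G} (hs : (univ : Set M).Definable L (ι '' s)) :
    (univ : Set M).Definable L (ι '' ((· ^ k) '' s)) := by
  rw [← isDefinableRel_fin_one_iff] at hs ⊢
  have h : {x : Fin 1 → G | x 0 ∈ (· ^ k) '' s} =
      (fun y => y ∘ (![1] : Fin 1 → Fin 2)) ''
        ({y | y 1 = y 0 ^ k} ∩ (fun y => y ∘ (![0] : Fin 1 → Fin 2)) ⁻¹' {x | x 0 ∈ s}) := by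
    ext x
    constructor
    · rintro ⟨a, ha, hx⟩
      refine ⟨![a, x 0], ⟨hx.symm, ha⟩, ?_⟩
      funext i
      fin_cases i
      rfl
    · rintro ⟨y, ⟨hy, hys⟩, rfl⟩
      exact ⟨y 0, hys, hy.symm⟩
  rw [h]
  exact ((hG.isDefinableRel_pow k).inter hG.1 (hs.preimage_comp hG.1 hG.2.1 _)).image_comp _

end IsDefinableGroupEmbedding

end DefinableRelations

section DefinableSubgroups

variable {L : FirstOrder.Language} {M : Type*} [L.Structure M] {n : ℕ} {G : Type*} [Group G]
  {ι : G → Fin n → M}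

theorem IsDefinableSubgroup.inf (hι : Function.Injective ι) {H K : Subgroup G}
    (hH : IsDefinableSubgroup L M ι H) (hK : IsDefinableSubgroup L M ι K) :
    IsDefinableSubgroup L M ι (H ⊓ K) := by
  unfold IsDefinableSubgroup at *
  rw [Subgroup.coe_inf, image_inter hι]
  exact hH.inter hK

theorem IsDefinableSubgroup.of_le (hG : IsDefinableGroupEmbedding L M ι) {K H : Subgroup G}
    (hK : IsDefinableSubgroup L M ι K) (hKH : K ≤ H) (hfin : K.relIndex H ≠ 0) :
    IsDefinableSubgroup L M ι H := by
  have : (K.subgroupOf H).FiniteIndex := ⟨hfin⟩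
  have hcosets : (H : Set G) = ⋃ q : H ⧸ K.subgroupOf H, (q.out : G) • (K : Set G) := by
    ext x
    simp only [mem_iUnion, mem_leftCoset_iff, SetLike.mem_coe]
    constructor
    · intro hx
      refine ⟨(⟨x, hx⟩ : H), ?_⟩
      exact Subgroup.mem_subgroupOf.1 (QuotientGroup.eq.1 (QuotientGroup.out_eq' _))
    · rintro ⟨q, hq⟩
      simpa using H.mul_mem q.out.2 (hKH hq)
  unfold IsDefinableSubgroup at *
  rw [hcosets, image_iUnion]
  exact definable_iUnion_of_finite fun q => hG.definable_image_smul _ hK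

theorem IsDefinableSubgroup.sup_zpowers (hG : IsDefinableGroupEmbedding L M ι) {K : Subgroup G}
    [K.Normal] (hK : IsDefinableSubgroup L M ι K) {g : G} {k : ℕ} (hk : k ≠ 0)
    (hgk : g ^ k ∈ K) : IsDefinableSubgroup L M ι (K ⊔ Subgroup.zpowers g) :=
  hK.of_le hG le_sup_left (Subgroup.relIndex_sup_zpowers_ne_zero hk hgk)

theorem IsDefinableSubgroup.map_powMonoidHom {G : Type*} [CommGroup G] {ι : G → Fin n → M}
    (hG : IsDefinableGroupEmbedding L M ι) {H : Subgroup G} (hH : IsDefinableSubgroup L M ι H)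
    (k : ℕ) : IsDefinableSubgroup L M ι (H.map (powMonoidHom k)) :=
  hG.definable_image_pow k hH

end DefinableSubgroups

def DefinablyGenerates (L : FirstOrder.Language) (M : Type*) [L.Structure M] {n : ℕ}
    {G : Type*} [Group G] (ι : G → Fin n → M) (g : G) (K : Subgroup G) : Prop :=
  ∀ H : Subgroup G, IsDefinableSubgroup L M ι H → g ∈ H → K ≤ H

namespace DefinablyGenerates

variable {L : FirstOrder.Language} {M : Type*} [L.Structure M] {n : ℕ}

section Group

variable {G : Type*} [Group G] {ι : G → Fin n → M}

theorem zpowers_mk_eq_top (hG : IsDefinableGroupEmbedding L M ι) {K : Subgroup G} [K.Normal]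
    [K.FiniteIndex] (hK : IsDefinableSubgroup L M ι K) {g : G}
    (hg : DefinablyGenerates L M ι g ⊤) : Subgroup.zpowers (g : G ⧸ K) = ⊤ := by
  have hKZ : K ≤ (Subgroup.zpowers (g : G ⧸ K)).comap (QuotientGroup.mk' K) := fun x hx => by
    rw [Subgroup.mem_comap, QuotientGroup.mk'_apply, (QuotientGroup.eq_one_iff x).2 hx]
    exact one_mem _
  have hZ := top_le_iff.1 <| hg _
    (hK.of_le hG hKZ (Subgroup.isFiniteRelIndex_of_finiteIndex).relIndex_ne_zero)
    (Subgroup.mem_comap.2 (Subgroup.mem_zpowers _))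
  rw [← Subgroup.map_comap_eq_self_of_surjective (QuotientGroup.mk'_surjective K)
    (Subgroup.zpowers _), hZ, ← MonoidHom.range_eq_map,
    MonoidHom.range_eq_top.2 (QuotientGroup.mk'_surjective K)]

end Group

variable {G : Type*} [CommGroup G] {ι : G → Fin n → M}

theorem pow_orderOf_mk (hG : IsDefinableGroupEmbedding L M ι) {K : Subgroup G} [K.FiniteIndex]
    (hK : IsDefinableSubgroup L M ι K) {g : G} (hg : DefinablyGenerates L M ι g ⊤) :
    DefinablyGenerates L M ι (g ^ orderOf (g : G ⧸ K)) K := by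
  intro H hH hgH
  set k := orderOf (g : G ⧸ K)
  have hS := top_le_iff.1 <| hg _ ((hH.inf hG.1 hK).sup_zpowers hG (orderOf_pos _).ne'
    ⟨hgH, QuotientGroup.pow_orderOf_mk_mem K g⟩) (Subgroup.mem_sup_right (Subgroup.mem_zpowers g))
  intro x hx
  obtain ⟨c, hc, _, ⟨j, rfl⟩, rfl⟩ := Subgroup.mem_sup.1 (hS ▸ Subgroup.mem_top x)
  have hgj : g ^ j ∈ K := by simpa using K.mul_mem (K.inv_mem hc.2) hx
  obtain ⟨i, rfl⟩ : (k : ℤ) ∣ j := by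
    rwa [orderOf_dvd_iff_zpow_eq_one, ← QuotientGroup.mk_zpow, QuotientGroup.eq_one_iff]
  show c * g ^ ((k : ℤ) * i) ∈ H
  rw [zpow_mul, zpow_natCast]
  exact H.mul_mem hc.1 (H.zpow_mem hgH i)

theorem le_map_powMonoidHom (hG : IsDefinableGroupEmbedding L M ι) {K : Subgroup G}
    [K.FiniteIndex] (hK : IsDefinableSubgroup L M ι K)
    (hKmin : ∀ H : Subgroup G, IsDefinableSubgroup L M ι H → H.FiniteIndex → K ≤ H)
    {h : G} (hhK : h ∈ K) (hh : DefinablyGenerates L M ι h K) {k : ℕ} (hk : k ≠ 0) :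
    K ≤ K.map (powMonoidHom k) := by
  set Q := K.map (powMonoidHom k)
  have hQ : IsDefinableSubgroup L M ι Q := hK.map_powMonoidHom hG k
  have hhQ : h ^ k ∈ Q := ⟨h, hhK, rfl⟩
  have hKS : K ≤ Q ⊔ Subgroup.zpowers h :=
    hh _ (hQ.sup_zpowers hG hk hhQ) (Subgroup.mem_sup_right (Subgroup.mem_zpowers h))
  have := Subgroup.finiteIndex_of_le hKS
  refine hKmin Q hQ ⟨?_⟩
  rw [← Subgroup.relIndex_mul_index (le_sup_left : Q ≤ Q ⊔ Subgroup.zpowers h)]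
  exact mul_ne_zero (Subgroup.relIndex_sup_zpowers_ne_zero hk hhQ)
    Subgroup.FiniteIndex.index_ne_zero

end DefinablyGenerates

theorem abelian_definable_group_monogenic_iff_general
    (L : FirstOrder.Language) (M : Type*) [L.Structure M]
    {n : ℕ} {G : Type*} [CommGroup G] (ι : G → (Fin n → M))
    (hG : IsDefinableGroupEmbedding L M ι)
    (G0 : Subgroup G) (hG0def : IsDefinableSubgroup L M ι G0)
    (hG0fin : G0.FiniteIndex)
    (hG0min : ∀ H : Subgroup G, IsDefinableSubgroup L M ι H → H.FiniteIndex → G0 ≤ H) :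
    (∃ g : G, ∀ H : Subgroup G, IsDefinableSubgroup L M ι H → g ∈ H → H = ⊤) ↔
      ((∃ h ∈ G0, ∀ H : Subgroup G, IsDefinableSubgroup L M ι H → h ∈ H → G0 ≤ H) ∧
        IsCyclic (G ⧸ G0)) := by
  constructor
  · rintro ⟨g, hg⟩
    have hg : DefinablyGenerates L M ι g ⊤ := fun H hH hgH => (hg H hH hgH).ge
    exact ⟨⟨_, QuotientGroup.pow_orderOf_mk_mem G0 g, hg.pow_orderOf_mk hG hG0def⟩,
      ⟨g, fun q => (hg.zpowers_mk_eq_top hG hG0def).ge (Subgroup.mem_top q)⟩⟩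
  · rintro ⟨⟨h, hh0, hh⟩, hcyc⟩
    obtain ⟨q, hq⟩ := hcyc.exists_generator
    obtain ⟨a, rfl⟩ := QuotientGroup.mk_surjective q
    obtain ⟨s, hs, hsm⟩ := DefinablyGenerates.le_map_powMonoidHom hG hG0def hG0min hh0 hh
      hG0fin.index_ne_zero (G0.mul_mem (G0.inv_mem (G0.pow_index_mem a)) hh0)
    have hgm : (a * s) ^ G0.index = h := by
      rw [mul_pow, show s ^ G0.index = _ from hsm, mul_inv_cancel_left]
    refine ⟨a * s, fun H hH hgH => Subgroup.eq_top_of_le_of_zpowers_mk_eq_top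
      (hh H hH (hgm ▸ H.pow_mem hgH _)) ?_ hgH⟩
    rw [QuotientGroup.mk_mul, (QuotientGroup.eq_one_iff s).2 hs, mul_one]
    exact eq_top_iff.2 fun x _ => hq x

/-- An abelian definable group `G` in an o-minimal structure, with `G⁰` its definably
connected component of the identity (a definable finite-index subgroup contained in every
definable finite-index subgroup), is monogenic if and only if `G⁰` is monogenic and the
finite quotient `G/G⁰` is cyclic. -/
theorem abelian_definable_group_monogenic_iff
    (L : FirstOrder.Language) (M : Type*) [L.Structure M]
    [LinearOrder M] [DenselyOrdered M] [NoMinOrder M] [NoMaxOrder M] [Nontrivial M]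
    (ltSymb : L.Relations 2)
    (hlt : ∀ a b : M, Structure.RelMap ltSymb ![a, b] ↔ a < b)
    (homin : IsOMinimalStructure L M)
    {n : ℕ} {G : Type*} [CommGroup G] (ι : G → (Fin n → M))
    (hG : IsDefinableGroupEmbedding L M ι)
    (G0 : Subgroup G) (hG0def : IsDefinableSubgroup L M ι G0)
    (hG0fin : G0.FiniteIndex)
    (hG0min : ∀ H : Subgroup G, IsDefinableSubgroup L M ι H → H.FiniteIndex → G0 ≤ H) :
    (∃ g : G, ∀ H : Subgroup G, IsDefinableSubgroup L M ι H → g ∈ H → H = ⊤) ↔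
      ((∃ h ∈ G0, ∀ H : Subgroup G, IsDefinableSubgroup L M ι H → h ∈ H → G0 ≤ H) ∧
        IsCyclic (G ⧸ G0)) :=
  abelian_definable_group_monogenic_iff_general L M ι hG G0 hG0def hG0fin hG0min
end

section
/- Let I be a finite index set, let (H_i)_{i ∈ I} be a family of simple groups, and for each i let x_i ∈ H_i be an element of finite order n_i with n_i > 1, such that the orders n_i are pairwise coprime. Then the normal closure in the direct product ∏_{i ∈ I} H_i of the single element (x_i)_{i ∈ I} is the whole group ∏_{i ∈ I} H_i. -/
/-!
Raising `x` to the product `k` of the orders `m j`, `j ≠ i`, kills every coordinate except the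
`i`-th, and `x i ^ k` still has order `m i > 1` because `m i` is coprime to `k`. Hence the normal
closure of `x` meets the `i`-th factor nontrivially; as `H i` is simple, it contains the whole
factor, and the factors generate the finite product.
-/

open Subgroup

theorem IsSimpleGroup.normalClosure_singleton_eq_top {G : Type*} [Group G] [IsSimpleGroup G]
    {g : G} (hg : g ≠ 1) : normalClosure {g} = ⊤ :=
  normalClosure_normal.eq_bot_or_eq_top.resolve_left fun h =>
    hg <| mem_bot.mp (h ▸ subset_normalClosure rfl)

section Pi

variable {I : Type*} [DecidableEq I] {H : I → Type*} [∀ i, Group (H i)]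

theorem Pi.pow_eq_mulSingle_of_orderOf_dvd (x : ∀ i, H i) (i : I) {k : ℕ}
    (hk : ∀ j ≠ i, orderOf (x j) ∣ k) : x ^ k = Pi.mulSingle i (x i ^ k) := by
  funext j
  by_cases hji : j = i
  · subst hji
    simp
  · simp [hji, orderOf_dvd_iff_pow_eq_one.mp (hk j hji)]

theorem Subgroup.Normal.mulSingle_mem_of_isSimpleGroup {N : Subgroup (∀ i, H i)} (hN : N.Normal)
    {i : I} [IsSimpleGroup (H i)] {g : H i} (hg : g ≠ 1) (hgN : Pi.mulSingle i g ∈ N)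
    (h : H i) : Pi.mulSingle i h ∈ N := by
  have : (N.comap (MonoidHom.mulSingle H i)).Normal := hN.comap _
  have hle : normalClosure {g} ≤ N.comap (MonoidHom.mulSingle H i) :=
    normalClosure_le_normal (Set.singleton_subset_iff.mpr hgN)
  exact hle (IsSimpleGroup.normalClosure_singleton_eq_top hg ▸ mem_top h)

end Pi

/-- If `(H i)` is a finite family of simple groups and `x i ∈ H i` are elements of finite
orders `m i > 1` that are pairwise coprime, then the normal closure of the single element
`(x i)_i` in the direct product `∀ i, H i` is the whole group. -/
theorem normalClosure_single_element_pi_simple_eq_top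
    {I : Type*} [Finite I] (H : I → Type*) [∀ i, Group (H i)] [∀ i, IsSimpleGroup (H i)]
    (x : ∀ i, H i) (m : I → ℕ)
    (hord : ∀ i, orderOf (x i) = m i) (hone : ∀ i, 1 < m i)
    (hcop : ∀ i j, i ≠ j → Nat.Coprime (m i) (m j)) :
    Subgroup.normalClosure {x} = ⊤ := by
  classical
  cases nonempty_fintype I
  refine eq_top_iff.mpr fun y _ => pi_mem_of_mulSingle_mem y fun i => ?_
  set k := ∏ j ∈ Finset.univ.erase i, m j
  have hxk : x ^ k = Pi.mulSingle i (x i ^ k) :=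
    Pi.pow_eq_mulSingle_of_orderOf_dvd x i fun j hj => by
      rw [hord j]
      exact Finset.dvd_prod_of_mem m (Finset.mem_erase.mpr ⟨hj, Finset.mem_univ j⟩)
  have hcopk : (orderOf (x i)).Coprime k := by
    rw [hord i]
    exact Nat.Coprime.prod_right fun j hj => hcop i j (Finset.ne_of_mem_erase hj).symm
  have hxik : x i ^ k ≠ 1 := fun h =>
    (hone i).ne' (by rw [← hord i, ← hcopk.orderOf_pow, h, orderOf_one])
  have hxkN : Pi.mulSingle i (x i ^ k) ∈ normalClosure {x} :=
    hxk ▸ pow_mem (subset_normalClosure (Set.mem_singleton x)) k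
  exact normalClosure_normal.mulSingle_mem_of_isSimpleGroup hxik hxkN (y i)
end

section
/- Consider the first-order language of ordered rings extended by one unary predicate symbol, and ℝ as a structure for this language with the standard ordered-field interpretation and the predicate interpreted as the set ℤ of integers. Then for every finite subset X of ℝ, the subgroup of (ℝ, +) generated by X is a proper subgroup of ℝ whose underlying set is definable with parameters in this structure. In particular, (ℝ, +) is not definably finitely generated in this structure: no finite subset X of ℝ has the property that the only definable subgroup of (ℝ, +) containing X is ℝ. -/
open FirstOrder

/-- Function symbols of the language of ordered rings: `+`, `·`, `-` (negation), `0`, `1`. -/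
inductive OrdRingFunc : ℕ → Type
  | add : OrdRingFunc 2
  | mul : OrdRingFunc 2
  | neg : OrdRingFunc 1
  | zero : OrdRingFunc 0
  | one : OrdRingFunc 0

/-- Relation symbols of the language of ordered rings extended by one unary predicate symbol:
the order relation `<` and a unary predicate `Z`. -/
inductive OrdRingZRel : ℕ → Type
  | lt : OrdRingZRel 2
  | int : OrdRingZRel 1

/-- The first-order language of ordered rings (symbols `+, ·, -, 0, 1, <`) extended by one
unary predicate symbol. -/
def ordRingZLang : FirstOrder.Language :=
  ⟨OrdRingFunc, OrdRingZRel⟩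

/-- `ℝ` as a structure for the language of ordered rings with one extra unary predicate:
the ordered-field symbols get their standard interpretations and the unary predicate is
interpreted as the set `ℤ` of integers. -/
instance realOrdRingZStructure : ordRingZLang.Structure ℝ where
  funMap {_} f x :=
    match f with
    | .add => x 0 + x 1
    | .mul => x 0 * x 1
    | .neg => -(x 0)
    | .zero => 0
    | .one => 1
  RelMap {_} r x :=
    match r with
    | .lt => x 0 < x 1
    | .int => ∃ m : ℤ, x 0 = (m : ℝ)

/-!
The subgroup generated by `x₁, …, x_k` is `ℤx₁ + ⋯ + ℤx_k`. Each `ℤxᵢ` is the image of the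
predicate `ℤ` under `y ↦ y · xᵢ`, a sum of two sets is the image of their product under `+`, and
the image of a definable set under a definable function is definable (by an existential
quantifier), so the subgroup is definable by induction on `k`.
Being the image of a free group on finitely many generators, it is countable, hence proper in `ℝ`.
-/

open Set FirstOrder.Language Pointwise

theorem AddSubgroup.countable_coe_closure {G : Type*} [AddGroup G] {s : Set G}
    (hs : s.Countable) : (closure s : Set G).Countable := by
  have := hs.to_subtype
  rw [FreeAddGroup.closure_eq_range, AddMonoidHom.coe_range]
  exact countable_range _

theorem AddSubgroup.closure_ne_top_of_countable {G : Type*} [AddGroup G] [Uncountable G]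
    {s : Set G} (hs : s.Countable) : closure s ≠ ⊤ := by
  intro h
  have := countable_coe_closure hs
  rw [h, coe_top] at this
  exact not_countable_univ this

theorem AddSubgroup.coe_closure_insert {G : Type*} [AddCommGroup G] (a : G) (s : Set G) :
    (closure (insert a s) : Set G) = zmultiples a + closure s := by
  rw [insert_eq, closure_union, ← zmultiples_eq_closure, add_normal]

namespace Set

variable {M : Type*} {L : FirstOrder.Language} [L.Structure M] {A : Set M}

theorem Definable.definable₁_image {n : ℕ} {S : Set (Fin n → M)} (hS : A.Definable L S)
    {f : (Fin n → M) → M} (hf : A.DefinableFun L f) : A.Definable₁ L (f '' S) := by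
  have hgraph : A.Definable L
      {w : Fin 1 ⊕ Fin n → M | w ∘ Sum.inr ∈ S ∧ f (w ∘ Sum.inr) = w (Sum.inl 0)} :=
    (hS.preimage_comp Sum.inr).inter <|
      (hf.comp fun _ => DefinableFun.proj L).ofPred_eq (DefinableFun.proj L)
  show A.Definable L _
  convert hgraph.exists_of_finite using 1
  ext x
  simp

end Set

section RealWithIntegers

variable {A : Set ℝ}

@[fun_prop]
theorem definableFun_add {α : Type*} {f g : (α → ℝ) → ℝ} (hf : A.DefinableFun ordRingZLang f)
    (hg : A.DefinableFun ordRingZLang g) : A.DefinableFun ordRingZLang fun v => f v + g v :=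
  DefinableFun.comp (g := fun v => ![f v, g v]) (fun i => by fin_cases i <;> assumption)
    (DefinableFun.fun_symbol (L := ordRingZLang) (M := ℝ) OrdRingFunc.add).of_empty

@[fun_prop]
theorem definableFun_mul {α : Type*} {f g : (α → ℝ) → ℝ} (hf : A.DefinableFun ordRingZLang f)
    (hg : A.DefinableFun ordRingZLang g) : A.DefinableFun ordRingZLang fun v => f v * g v :=
  DefinableFun.comp (g := fun v => ![f v, g v]) (fun i => by fin_cases i <;> assumption)
    (DefinableFun.fun_symbol (L := ordRingZLang) (M := ℝ) OrdRingFunc.mul).of_empty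

@[fun_prop]
theorem definableFun_zero {α : Type*} : A.DefinableFun ordRingZLang fun _ : α → ℝ => 0 :=
  DefinableFun.comp (g := fun _ => ![]) (fun i => i.elim0)
    (DefinableFun.fun_symbol (L := ordRingZLang) (M := ℝ) OrdRingFunc.zero).of_empty

theorem definable₁_singleton_zero : A.Definable₁ ordRingZLang ({0} : Set ℝ) :=
  (DefinableFun.proj _).ofPred_eq definableFun_zero

theorem definable₁_range_intCast : A.Definable₁ ordRingZLang (range ((↑) : ℤ → ℝ)) := by
  refine ⟨Relations.formula₁ (Sum.inl OrdRingZRel.int) (Term.var 0), ?_⟩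
  ext v
  exact exists_congr fun _ => eq_comm

theorem definable₁_zmultiples {a : ℝ} (ha : a ∈ A) :
    A.Definable₁ ordRingZLang (AddSubgroup.zmultiples a : Set ℝ) := by
  have : (AddSubgroup.zmultiples a : Set ℝ) =
      (fun v : Fin 1 → ℝ => v 0 * a) '' {v | v 0 ∈ range ((↑) : ℤ → ℝ)} := by
    ext x
    simp only [AddSubgroup.coe_zmultiples, zsmul_eq_mul, mem_range, mem_image, mem_ofPred_eq]
    constructor
    · rintro ⟨m, rfl⟩
      exact ⟨fun _ => m, ⟨m, rfl⟩, rfl⟩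
    · rintro ⟨v, ⟨m, hm⟩, rfl⟩
      exact ⟨m, by rw [hm]⟩
  rw [this]
  exact definable₁_range_intCast.definable₁_image (by fun_prop (disch := exact ha))

theorem Set.Definable₁.add {S T : Set ℝ} (hS : A.Definable₁ ordRingZLang S)
    (hT : A.Definable₁ ordRingZLang T) : A.Definable₁ ordRingZLang (S + T) := by
  have : S + T = (fun v : Fin 2 → ℝ => v 0 + v 1) '' {v | v 0 ∈ S ∧ v 1 ∈ T} := by
    ext x
    simp only [mem_add, mem_image, mem_ofPred_eq]
    constructor
    · rintro ⟨y, hy, z, hz, rfl⟩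
      exact ⟨![y, z], ⟨hy, hz⟩, rfl⟩
    · rintro ⟨v, ⟨hv0, hv1⟩, rfl⟩
      exact ⟨v 0, hv0, v 1, hv1, rfl⟩
  rw [this]
  exact ((hS.preimage_comp fun _ => 0).inter (hT.preimage_comp fun _ => 1)).definable₁_image
    (by fun_prop)

theorem definable₁_closure_finset (X : Finset ℝ) (hX : (X : Set ℝ) ⊆ A) :
    A.Definable₁ ordRingZLang (AddSubgroup.closure (X : Set ℝ) : Set ℝ) := by
  classical
  induction X using Finset.induction_on with
  | empty => simpa using definable₁_singleton_zero
  | insert a s _ ih =>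
    rw [Finset.coe_insert, AddSubgroup.coe_closure_insert] at *
    exact (definable₁_zmultiples (hX (mem_insert _ _))).add (ih ((subset_insert _ _).trans hX))

end RealWithIntegers

/-- In the real ordered field expanded by a predicate for `ℤ`, the subgroup of `(ℝ, +)`
generated by any finite set `X ⊆ ℝ` is a proper definable subgroup; in particular, `(ℝ, +)`
is not definably finitely generated in this structure: no finite subset of `ℝ` definably
generates `(ℝ, +)`. -/
theorem real_additive_group_not_definably_finitely_generated_with_int_predicate :
    (∀ X : Finset ℝ,
      AddSubgroup.closure (X : Set ℝ) ≠ ⊤ ∧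
        Set.Definable₁ (Set.univ : Set ℝ) ordRingZLang
          ((AddSubgroup.closure (X : Set ℝ) : AddSubgroup ℝ) : Set ℝ)) ∧
      ¬ ∃ X : Finset ℝ, ∀ H : AddSubgroup ℝ,
          Set.Definable₁ (Set.univ : Set ℝ) ordRingZLang (H : Set ℝ) →
          (X : Set ℝ) ⊆ (H : Set ℝ) → H = ⊤ := by
  have proper (X : Finset ℝ) : AddSubgroup.closure (X : Set ℝ) ≠ ⊤ :=
    AddSubgroup.closure_ne_top_of_countable X.countable_toSet
  have definable (X : Finset ℝ) :
      univ.Definable₁ ordRingZLang (AddSubgroup.closure (X : Set ℝ) : Set ℝ) :=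
    definable₁_closure_finset X (subset_univ _)
  refine ⟨fun X => ⟨proper X, definable X⟩, ?_⟩
  rintro ⟨X, hX⟩
  exact proper X (hX _ (definable X) AddSubgroup.subset_closure)
end
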